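/- Let (F, G) be a dual pair for H with B_G a Bessel bound of G, and let K : Ω → H be a Bessel mapping. Assume there exist constants λ, γ ≥ 0 with λ + γ√B_G < 1 such that ‖T_F φ − T_K φ‖ ≤ λ‖T_F φ‖ + γ‖φ‖_{L²} for all φ ∈ L²(Ω, μ). Then ‖I_H − T_K T_G*‖ ≤ λ + γ√B_G < 1, i.e. G and K are approximately dual continuous frames. -/

import Mathlib

open MeasureTheory
open scoped ENNReal

noncomputable section

variable {H : Type*} [NormedAddCommGroup H] [InnerProductSpace ℂ H] [CompleteSpace H]
variable {Ω : Type*} [MeasurableSpace Ω]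

/-- A map `F : Ω → H` is weakly measurable if `ω ↦ ⟨f, F ω⟩` is measurable for every `f ∈ H`. -/
def WeaklyMeasurableMap (F : Ω → H) : Prop :=
  ∀ f : H, Measurable fun ω => (inner ℂ f (F ω) : ℂ)

/-- `F` is a Bessel mapping for `H` with respect to `(Ω, μ)` with Bessel bound `B`:
it is weakly measurable and `∫ |⟨f, F ω⟩|² dμ ≤ B ‖f‖²` for all `f`. -/
def IsBesselMapping (μ : Measure Ω) (F : Ω → H) (B : ℝ) : Prop :=
  WeaklyMeasurableMap F ∧ ∀ f : H, ∫ ω, ‖(inner ℂ f (F ω) : ℂ)‖ ^ 2 ∂μ ≤ B * ‖f‖ ^ 2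

/-- `F` is a continuous frame for `H` with respect to `(Ω, μ)` with bounds `0 < A ≤ B`. -/
def IsContinuousFrame (μ : Measure Ω) (F : Ω → H) (A B : ℝ) : Prop :=
  WeaklyMeasurableMap F ∧ 0 < A ∧ A ≤ B ∧
    ∀ f : H, A * ‖f‖ ^ 2 ≤ ∫ ω, ‖(inner ℂ f (F ω) : ℂ)‖ ^ 2 ∂μ ∧
      ∫ ω, ‖(inner ℂ f (F ω) : ℂ)‖ ^ 2 ∂μ ≤ B * ‖f‖ ^ 2

/-- `T` is the synthesis operator of the Bessel mapping `F`: its adjoint (the analysis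
operator) satisfies `(T* f)(ω) = ⟨f, F ω⟩` for `μ`-a.e. `ω`, for every `f ∈ H`. -/
def IsSynthesisOperator (μ : Measure Ω) (F : Ω → H) (T : Lp ℂ 2 μ →L[ℂ] H) : Prop :=
  ∀ f : H, (ContinuousLinearMap.adjoint T f : Ω → ℂ) =ᵐ[μ] fun ω => (inner ℂ f (F ω) : ℂ)

/-! Taking adjoints in `T_G T_F* = I` gives `T_F T_G* = I`, so `φ = T_G* f` satisfies
`T_F φ = f` and `(I - T_K T_G*) f = T_F φ - T_K φ`. The perturbation hypothesis bounds this by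
`λ ‖f‖ + γ ‖T_G* f‖`, and the Bessel bound of `G` gives `‖T_G* f‖ ≤ √B_G ‖f‖`. -/

theorem MeasureTheory.L2.norm_sq_eq_integral_norm_sq {α 𝕜 E : Type*} [MeasurableSpace α]
    {μ : Measure α} [RCLike 𝕜] [NormedAddCommGroup E] [InnerProductSpace 𝕜 E]
    (φ : Lp E 2 μ) : ‖φ‖ ^ 2 = ∫ a, ‖φ a‖ ^ 2 ∂μ := by
  rw [norm_sq_eq_re_inner (𝕜 := 𝕜), L2.inner_def, ← integral_re (L2.integrable_inner φ φ)]
  simp only [← norm_sq_eq_re_inner]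

namespace IsSynthesisOperator

variable {μ : Measure Ω} {F : Ω → H} {T : Lp ℂ 2 μ →L[ℂ] H}

theorem norm_adjoint_apply_sq (hT : IsSynthesisOperator μ F T) (f : H) :
    ‖ContinuousLinearMap.adjoint T f‖ ^ 2 = ∫ ω, ‖(inner ℂ f (F ω) : ℂ)‖ ^ 2 ∂μ := by
  rw [L2.norm_sq_eq_integral_norm_sq (𝕜 := ℂ)]
  exact integral_congr_ae ((hT f).mono fun ω h => congrArg (‖·‖ ^ 2) h)

theorem opNorm_adjoint_le_sqrt {B : ℝ} (hT : IsSynthesisOperator μ F T)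
    (hF : IsBesselMapping μ F B) : ‖ContinuousLinearMap.adjoint T‖ ≤ Real.sqrt B := by
  refine ContinuousLinearMap.opNorm_le_bound _ (Real.sqrt_nonneg B) fun f => ?_
  calc ‖ContinuousLinearMap.adjoint T f‖
      = Real.sqrt (‖ContinuousLinearMap.adjoint T f‖ ^ 2) := (Real.sqrt_sq (norm_nonneg _)).symm
    _ ≤ Real.sqrt (B * ‖f‖ ^ 2) := Real.sqrt_le_sqrt (hT.norm_adjoint_apply_sq f ▸ hF.2 f)
    _ = Real.sqrt B * ‖f‖ := by rw [Real.sqrt_mul' _ (sq_nonneg _), Real.sqrt_sq (norm_nonneg _)]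

end IsSynthesisOperator

theorem ContinuousLinearMap.norm_one_sub_comp_le_of_perturbation {𝕜 E V : Type*}
    [NontriviallyNormedField 𝕜] [NormedAddCommGroup E] [NormedSpace 𝕜 E] [NormedAddCommGroup V]
    [NormedSpace 𝕜 V] {T T' : E →L[𝕜] V} {S : V →L[𝕜] E} (hTS : T ∘L S = 1) {lam gam : ℝ} (hlam : 0 ≤ lam)
    (hgam : 0 ≤ gam) (hpert : ∀ φ : E, ‖T φ - T' φ‖ ≤ lam * ‖T φ‖ + gam * ‖φ‖) :
    ‖(1 : V →L[𝕜] V) - T' ∘L S‖ ≤ lam + gam * ‖S‖ := by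
  refine ContinuousLinearMap.opNorm_le_bound _ (by positivity) fun f => ?_
  have hTSf : T (S f) = f := by simpa using congr($hTS f)
  calc ‖((1 : V →L[𝕜] V) - T' ∘L S) f‖ = ‖T (S f) - T' (S f)‖ := by simp [hTSf]
    _ ≤ lam * ‖T (S f)‖ + gam * ‖S f‖ := hpert (S f)
    _ ≤ lam * ‖f‖ + gam * (‖S‖ * ‖f‖) := by rw [hTSf]; gcongr; exact S.le_opNorm f
    _ = (lam + gam * ‖S‖) * ‖f‖ := by ring

theorem statement19_general {μ : Measure Ω} (G : Ω → H) (B_G : ℝ)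
    (hG : IsBesselMapping μ G B_G)
    (TF TG TK : Lp ℂ 2 μ →L[ℂ] H)
    (hTG : IsSynthesisOperator μ G TG)
    (hdualOp : TG ∘L ContinuousLinearMap.adjoint TF = 1)
    (lam gam : ℝ) (hlam : 0 ≤ lam) (hgam : 0 ≤ gam)
    (hsum : lam + gam * Real.sqrt B_G < 1)
    (hpert : ∀ φ : Lp ℂ 2 μ, ‖TF φ - TK φ‖ ≤ lam * ‖TF φ‖ + gam * ‖φ‖) :
    ‖(1 : H →L[ℂ] H) - TK ∘L ContinuousLinearMap.adjoint TG‖ ≤ lam + gam * Real.sqrt B_G ∧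
      lam + gam * Real.sqrt B_G < 1 := by
  have hdual : TF ∘L ContinuousLinearMap.adjoint TG = 1 := by
    simpa [ContinuousLinearMap.adjoint_comp, ContinuousLinearMap.adjoint_one] using
      congr(ContinuousLinearMap.adjoint $hdualOp)
  refine ⟨?_, hsum⟩
  calc ‖(1 : H →L[ℂ] H) - TK ∘L ContinuousLinearMap.adjoint TG‖
      ≤ lam + gam * ‖ContinuousLinearMap.adjoint TG‖ :=
        ContinuousLinearMap.norm_one_sub_comp_le_of_perturbation hdual hlam hgam hpert
    _ ≤ lam + gam * Real.sqrt B_G := by gcongr; exact hTG.opNorm_adjoint_le_sqrt hG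

/-- if `(F, G)` is a dual pair with `B_G` a Bessel bound of `G`, `K` is
a Bessel mapping, and `‖T_F φ - T_K φ‖ ≤ λ ‖T_F φ‖ + γ ‖φ‖₂` for all `φ ∈ L²` with
`λ + γ √B_G < 1`, then `‖I - T_K T_G*‖ ≤ λ + γ √B_G < 1`, i.e. `G` and `K` are
approximately dual continuous frames. -/
theorem statement19 {μ : Measure Ω} (F G K : Ω → H) (B_F B_G B_K : ℝ)
    (hF : IsBesselMapping μ F B_F) (hG : IsBesselMapping μ G B_G)
    (hK : IsBesselMapping μ K B_K)
    (TF TG TK : Lp ℂ 2 μ →L[ℂ] H)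
    (hTF : IsSynthesisOperator μ F TF) (hTG : IsSynthesisOperator μ G TG)
    (hTK : IsSynthesisOperator μ K TK)
    (hdual : ∀ f g : H, (inner ℂ f g : ℂ) =
      ∫ ω, (inner ℂ f (F ω) : ℂ) * (inner ℂ (G ω) g : ℂ) ∂μ)
    (hdualOp : TG ∘L ContinuousLinearMap.adjoint TF = 1)
    (lam gam : ℝ) (hlam : 0 ≤ lam) (hgam : 0 ≤ gam)
    (hsum : lam + gam * Real.sqrt B_G < 1)
    (hpert : ∀ φ : Lp ℂ 2 μ, ‖TF φ - TK φ‖ ≤ lam * ‖TF φ‖ + gam * ‖φ‖) :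
    ‖(1 : H →L[ℂ] H) - TK ∘L ContinuousLinearMap.adjoint TG‖ ≤ lam + gam * Real.sqrt B_G ∧
      lam + gam * Real.sqrt B_G < 1 :=
  statement19_general G B_G hG TF TG TK hTG hdualOp lam gam hlam hgam hsum hpert
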